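/- arXiv:2310.12143 — 4 statements merged into one kernel-verified Lean document; each statement's English description precedes it below -/
import Mathlib

section
/- If F₁ and F₂ are orthogonal projections onto subspaces U₁, U₂ of ℝ^d, then for any vector x, the sequence x_n = (F₁F₂)ⁿ x converges to the orthogonal projection of x onto U₁ ∩ U₂. -/
open Filter
open scoped RealInnerProductSpace

section vonNeumann

variable {E : Type*} [NormedAddCommGroup E] [InnerProductSpace ℝ E] [FiniteDimensional ℝ E]

lemma orthogonalProjection_inner_eq_zero {K : Submodule ℝ E} (v w : E) (hw : w ∈ K) :
    ⟪v - (Submodule.orthogonalProjectionOnto K v : E), w⟫ = 0 :=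
  Submodule.starProjection_inner_eq_zero v w hw

lemma orthogonalProjection_eq_self_iff {K : Submodule ℝ E} {v : E} :
    (Submodule.orthogonalProjectionOnto K v : E) = v ↔ v ∈ K :=
  Submodule.starProjection_eq_self_iff

lemma inner_orthogonalProjection_left_eq_right {K : Submodule ℝ E} (u v : E) :
    ⟪(Submodule.orthogonalProjectionOnto K u : E), v⟫ = ⟪u, (Submodule.orthogonalProjectionOnto K v : E)⟫ :=
  Submodule.inner_starProjection_left_eq_right K u v

lemma sub_orthogonalProjection_mem_orthogonal {K : Submodule ℝ E} (v : E) :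
    v - (Submodule.orthogonalProjectionOnto K v : E) ∈ Kᗮ :=
  Submodule.sub_starProjection_mem_orthogonal v

/-- Pythagoras for the orthogonal projection. -/
lemma aux_pyth (U : Submodule ℝ E) (y : E) :
    ‖y‖ ^ 2 = ‖(Submodule.orthogonalProjectionOnto U y : E)‖ ^ 2 + ‖y - Submodule.orthogonalProjectionOnto U y‖ ^ 2 := by
  have horth : (inner ℝ ((Submodule.orthogonalProjectionOnto U y : E)) (y - (Submodule.orthogonalProjectionOnto U y : E)) : ℝ) = 0 := by
    have h := orthogonalProjection_inner_eq_zero (K := U) y _ (Submodule.orthogonalProjectionOnto U y).2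
    rw [real_inner_comm]
    exact h
  have := norm_add_sq_eq_norm_sq_add_norm_sq_real horth
  simpa [pow_two] using this

lemma aux_proj_norm_le (U : Submodule ℝ E) (y : E) :
    ‖(Submodule.orthogonalProjectionOnto U y : E)‖ ≤ ‖y‖ := by
  have h := aux_pyth U y
  nlinarith [norm_nonneg (y - (Submodule.orthogonalProjectionOnto U y : E)), norm_nonneg y,
    norm_nonneg ((Submodule.orthogonalProjectionOnto U y : E))]

lemma aux_proj_norm_eq (U : Submodule ℝ E) (y : E)
    (h : ‖(Submodule.orthogonalProjectionOnto U y : E)‖ = ‖y‖) : (Submodule.orthogonalProjectionOnto U y : E) = y := by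
  have hp := aux_pyth U y
  rw [h] at hp
  have h2 : ‖y - (Submodule.orthogonalProjectionOnto U y : E)‖ ^ 2 = 0 := by linarith
  have h3 : y - (Submodule.orthogonalProjectionOnto U y : E) = 0 :=
    norm_eq_zero.mp (by nlinarith [norm_nonneg (y - (Submodule.orthogonalProjectionOnto U y : E))])
  exact (sub_eq_zero.mp h3).symm

variable (U₁ U₂ : Submodule ℝ E)

/-- The alternating projection operator. -/
noncomputable def altT : E →L[ℝ] E :=
  (U₁.subtypeL.comp (Submodule.orthogonalProjectionOnto U₁)).comp
    (U₂.subtypeL.comp (Submodule.orthogonalProjectionOnto U₂))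

lemma altT_apply (y : E) :
    altT U₁ U₂ y = (Submodule.orthogonalProjectionOnto U₁ ((Submodule.orthogonalProjectionOnto U₂ y : E)) : E) := rfl

lemma altT_norm_le (y : E) : ‖altT U₁ U₂ y‖ ≤ ‖y‖ :=
  (aux_proj_norm_le U₁ _).trans (aux_proj_norm_le U₂ y)

lemma altT_mem_inf_of_norm_eq (y : E) (h : ‖altT U₁ U₂ y‖ = ‖y‖) : y ∈ U₁ ⊓ U₂ := by
  have h2 : ‖(Submodule.orthogonalProjectionOnto U₂ y : E)‖ = ‖y‖ :=
    le_antisymm (aux_proj_norm_le U₂ y)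
      (h ▸ (aux_proj_norm_le U₁ ((Submodule.orthogonalProjectionOnto U₂ y : E))))
  have hy2 : (Submodule.orthogonalProjectionOnto U₂ y : E) = y := aux_proj_norm_eq U₂ y h2
  have h1 : ‖(Submodule.orthogonalProjectionOnto U₁ y : E)‖ = ‖y‖ := by
    rw [← h, altT_apply, hy2]
  have hy1 : (Submodule.orthogonalProjectionOnto U₁ y : E) = y := aux_proj_norm_eq U₁ y h1
  exact ⟨orthogonalProjection_eq_self_iff.mp hy1, orthogonalProjection_eq_self_iff.mp hy2⟩

lemma altT_fixed (y : E) (hy : y ∈ U₁ ⊓ U₂) : altT U₁ U₂ y = y := by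
  rw [altT_apply, orthogonalProjection_eq_self_iff.mpr hy.2,
    orthogonalProjection_eq_self_iff.mpr hy.1]

lemma altT_mem_orthogonal (y : E) (hy : y ∈ (U₁ ⊓ U₂)ᗮ) :
    altT U₁ U₂ y ∈ (U₁ ⊓ U₂)ᗮ := by
  intro m hm
  rw [altT_apply]
  rw [← inner_orthogonalProjection_left_eq_right,
    orthogonalProjection_eq_self_iff.mpr hm.1,
    ← inner_orthogonalProjection_left_eq_right,
    orthogonalProjection_eq_self_iff.mpr hm.2]
  exact hy m hm

/-- Strict contraction on the orthogonal complement of the intersection. -/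
lemma altT_contraction :
    ∃ c : ℝ, 0 ≤ c ∧ c < 1 ∧ ∀ y ∈ (U₁ ⊓ U₂)ᗮ, ‖altT U₁ U₂ y‖ ≤ c * ‖y‖ := by
  by_cases hbot : (U₁ ⊓ U₂)ᗮ = ⊥
  · refine ⟨0, le_refl _, one_pos, fun y hy => ?_⟩
    have : y = 0 := by simpa [hbot] using hy
    simp [this]
  · -- the unit sphere inside the complement is compact and nonempty
    set K : Set E := Metric.sphere (0 : E) 1 ∩ ((U₁ ⊓ U₂)ᗮ : Set E) with hK
    have hKc : IsCompact K :=
      (isCompact_sphere (0 : E) 1).inter_right (Submodule.closed_of_finiteDimensional _)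
    obtain ⟨v, hv, hvne⟩ := Submodule.exists_mem_ne_zero_of_ne_bot hbot
    have hKne : K.Nonempty := by
      refine ⟨(‖v‖)⁻¹ • v, ?_, Submodule.smul_mem _ _ hv⟩
      simp [norm_smul, norm_ne_zero_iff.mpr hvne,
        inv_mul_cancel₀ (norm_ne_zero_iff.mpr hvne)]
    obtain ⟨y₀, hy₀K, hy₀max⟩ := hKc.exists_isMaxOn hKne
      ((altT U₁ U₂).continuous.norm.continuousOn)
    refine ⟨‖altT U₁ U₂ y₀‖, norm_nonneg _, ?_, ?_⟩
    · rcases lt_or_eq_of_le (altT_norm_le U₁ U₂ y₀) with h | h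
      · have : ‖y₀‖ = 1 := by simpa using hy₀K.1
        linarith [this ▸ h]
      · exfalso
        have hy0m : y₀ ∈ U₁ ⊓ U₂ := altT_mem_inf_of_norm_eq U₁ U₂ y₀ h
        have : y₀ = 0 := by
          have := (Submodule.mem_orthogonal _ _).1 hy₀K.2 y₀ hy0m
          exact inner_self_eq_zero.mp this
        have h1 : ‖y₀‖ = 1 := by simpa using hy₀K.1
        rw [this] at h1; simp at h1
    · intro y hy
      rcases eq_or_ne y 0 with rfl | hyne
      · simp
      · have hns : (‖y‖)⁻¹ • y ∈ K := by
          refine ⟨?_, Submodule.smul_mem _ _ hy⟩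
          simp [norm_smul, inv_mul_cancel₀ (norm_ne_zero_iff.mpr hyne)]
        have hTs : ‖altT U₁ U₂ ((‖y‖)⁻¹ • y)‖ = (‖y‖)⁻¹ * ‖altT U₁ U₂ y‖ := by
          rw [map_smul, norm_smul]
          simp
        have hle : (‖y‖)⁻¹ * ‖altT U₁ U₂ y‖ ≤ ‖altT U₁ U₂ y₀‖ := by
          simpa [norm_smul, norm_inv, norm_norm] using hy₀max hns
        have hpos : (0:ℝ) < ‖y‖ := norm_pos_iff.mpr hyne
        calc ‖altT U₁ U₂ y‖ = ‖y‖ * ((‖y‖)⁻¹ * ‖altT U₁ U₂ y‖) := by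
              field_simp
          _ ≤ ‖y‖ * ‖altT U₁ U₂ y₀‖ := mul_le_mul_of_nonneg_left hle (le_of_lt hpos)
          _ = ‖altT U₁ U₂ y₀‖ * ‖y‖ := mul_comm _ _

end vonNeumann

/-- von Neumann alternating projections in `ℝ^d`: for subspaces `U₁, U₂`
with orthogonal projections `F₁, F₂`, the iterates `(F₁F₂)ⁿ x` converge to the orthogonal
projection of `x` onto `U₁ ⊓ U₂`. -/
theorem stmt_6 (d : ℕ) (U₁ U₂ : Submodule ℝ (EuclideanSpace ℝ (Fin d)))
    (x : EuclideanSpace ℝ (Fin d)) :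
    Filter.Tendsto
      (fun n : ℕ =>
        (fun y : EuclideanSpace ℝ (Fin d) =>
          ((Submodule.orthogonalProjectionOnto U₁ ((Submodule.orthogonalProjectionOnto U₂ y : EuclideanSpace ℝ (Fin d))) :
            EuclideanSpace ℝ (Fin d))))^[n] x)
      Filter.atTop
      (nhds ((Submodule.orthogonalProjectionOnto (U₁ ⊓ U₂) x : EuclideanSpace ℝ (Fin d)))) := by
  let E := EuclideanSpace ℝ (Fin d)
  set T := altT U₁ U₂ with hT
  have hfun : (fun y : E =>
      ((Submodule.orthogonalProjectionOnto U₁ ((Submodule.orthogonalProjectionOnto U₂ y : E)) : E))) = ⇑T := by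
    funext y; rw [hT, altT_apply]
  rw [hfun]
  set p : E := (Submodule.orthogonalProjectionOnto (U₁ ⊓ U₂) x : E) with hp
  have hpmem : p ∈ U₁ ⊓ U₂ := (Submodule.orthogonalProjectionOnto (U₁ ⊓ U₂) x).2
  have hxp : x - p ∈ (U₁ ⊓ U₂)ᗮ := sub_orthogonalProjection_mem_orthogonal x
  -- iterates split
  obtain ⟨c, hc0, hc1, hc⟩ := altT_contraction U₁ U₂
  -- key: (⇑T)^[n] x = p + (⇑T)^[n] (x - p), and (⇑T)^[n] (x-p) ∈ complement with norm bound
  have key : ∀ n : ℕ, (⇑T)^[n] (x - p) ∈ (U₁ ⊓ U₂)ᗮ ∧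
      ‖(⇑T)^[n] (x - p)‖ ≤ c ^ n * ‖x - p‖ ∧ (⇑T)^[n] x = p + (⇑T)^[n] (x - p) := by
    intro n
    induction n with
    | zero => exact ⟨hxp, by simp, by simp⟩
    | succ n ih =>
      obtain ⟨hmem, hnorm, heq⟩ := ih
      refine ⟨?_, ?_, ?_⟩
      · rw [Function.iterate_succ_apply']
        exact altT_mem_orthogonal U₁ U₂ _ hmem
      · rw [Function.iterate_succ_apply']
        calc ‖T ((⇑T)^[n] (x - p))‖ ≤ c * ‖(⇑T)^[n] (x - p)‖ := hc _ hmem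
          _ ≤ c * (c ^ n * ‖x - p‖) := mul_le_mul_of_nonneg_left hnorm hc0
          _ = c ^ (n + 1) * ‖x - p‖ := by ring
      · rw [Function.iterate_succ_apply', Function.iterate_succ_apply', heq, map_add,
          altT_fixed U₁ U₂ p hpmem]
  have hzero : Tendsto (fun n => (⇑T)^[n] (x - p)) atTop (nhds 0) := by
    rw [tendsto_zero_iff_norm_tendsto_zero]
    refine squeeze_zero (fun n => norm_nonneg _) (fun n => (key n).2.1) ?_
    have := (tendsto_pow_atTop_nhds_zero_of_lt_one hc0 hc1).mul_const ‖x - p‖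
    simpa [pow_two] using this
  have : Tendsto (fun n => p + (⇑T)^[n] (x - p)) atTop (nhds (p + 0)) :=
    tendsto_const_nhds.add hzero
  rw [add_zero] at this
  refine this.congr fun n => ((key n).2.2).symm
end

section
/- Any polynomial p(x₁,x₂) that vanishes on the whole unit circle {x₁²+x₂²=1} is divisible by the polynomial x₁² + x₂² − 1 in ℝ[x₁,x₂]. -/
open MvPolynomial Polynomial

noncomputable def g1 : MvPolynomial (Fin 1) ℝ ≃ₐ[ℝ] ℝ[X] :=
  (renameEquiv ℝ (Equiv.equivPUnit.{1} (Fin 1))).trans (pUnitAlgEquiv.{_,0} ℝ)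

lemma g1_eval (t : ℝ) (a : MvPolynomial (Fin 1) ℝ) :
    Polynomial.eval t (g1 a) = MvPolynomial.eval (fun _ => t) a := by
  have h : (Polynomial.aeval t).comp g1.toAlgHom = MvPolynomial.aeval (fun _ => t) := by
    apply MvPolynomial.algHom_ext
    intro i
    simp [g1, pUnitAlgEquiv]
  have h2 := congrArg (fun f => f a) h
  simp only [AlgHom.coe_comp, Function.comp_apply, AlgEquiv.toAlgHom_eq_coe,
    AlgHom.coe_coe] at h2
  rw [← Polynomial.coe_aeval_eq_eval, (show (Polynomial.aeval t) (g1 a) = (MvPolynomial.aeval fun _ => t) a from h2), ← MvPolynomial.coe_aeval_eq_eval]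
  rfl

lemma mv1_eq_zero_of_zero_on_Ioo (a : MvPolynomial (Fin 1) ℝ)
    (h : ∀ t ∈ Set.Ioo (-1:ℝ) 1, MvPolynomial.eval (fun _ => t) a = 0) : a = 0 := by
  have hg : g1 a = 0 := by
    apply Polynomial.eq_zero_of_infinite_isRoot
    refine Set.Infinite.mono ?_ (Set.Ioo_infinite (show (-1:ℝ) < 1 by norm_num))
    intro t ht
    simp only [Set.mem_setOf_eq, Polynomial.IsRoot, g1_eval]
    exact h t ht
  simpa using congrArg g1.symm hg

open MvPolynomial in
/-- any polynomial vanishing on the whole unit circle is divisible by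
`x₁² + x₂² − 1` in `ℝ[x₁,x₂]`. -/
theorem stmt_9 (p : MvPolynomial (Fin 2) ℝ)
    (hvanish : ∀ x : Fin 2 → ℝ, x 0 ^ 2 + x 1 ^ 2 = 1 → eval x p = 0) :
    (X 0 ^ 2 + X 1 ^ 2 - 1 : MvPolynomial (Fin 2) ℝ) ∣ p := by
  set e := finSuccEquiv ℝ 1 with he
  set q : Polynomial (MvPolynomial (Fin 1) ℝ) :=
    Polynomial.X ^ 2 + Polynomial.C (X 0 ^ 2 - 1) with hq
  have heq : e (X 0 ^ 2 + X 1 ^ 2 - 1) = q := by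
    have h1 : (1 : Fin 2) = (0 : Fin 1).succ := rfl
    rw [map_sub, map_add, map_pow, map_pow, h1, finSuccEquiv_X_zero, finSuccEquiv_X_succ,
      hq, Polynomial.C_sub, Polynomial.C_pow, Polynomial.C_1, map_one]
    ring
  have hmonic : q.Monic :=
    Polynomial.monic_X_pow_add (lt_of_le_of_lt (Polynomial.degree_C_le) (by norm_num))
  set P := e p with hP
  set r := P %ₘ q with hr
  have hdeg : r.degree ≤ 1 := by
    have hlt := Polynomial.degree_modByMonic_lt P hmonic
    have hdq : q.degree = 2 := by
      rw [hq]
      compute_degree!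
    rw [hdq] at hlt
    exact Order.le_of_lt_succ (by exact_mod_cast hlt)
  have hrform := Polynomial.eq_X_add_C_of_degree_le_one hdeg
  set a := r.coeff 1 with ha
  set b := r.coeff 0 with hb
  -- key evaluation fact
  have key : ∀ t ∈ Set.Ioo (-1:ℝ) 1, ∀ s : ℝ, s ^ 2 = 1 - t ^ 2 →
      MvPolynomial.eval (fun _ => t) a * s + MvPolynomial.eval (fun _ => t) b = 0 := by
    intro t _ s hs
    have hcirc : (Fin.cons s (fun _ => t) : Fin 2 → ℝ) 0 ^ 2
        + (Fin.cons s (fun _ => t) : Fin 2 → ℝ) 1 ^ 2 = 1 := by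
      have h1 : (1 : Fin 2) = (0 : Fin 1).succ := rfl
      rw [h1, Fin.cons_succ, Fin.cons_zero]
      linarith [hs]
    have hev := hvanish _ hcirc
    rw [eval_eq_eval_mv_eval' (fun _ => t) s p] at hev
    have hsplit : P.map (MvPolynomial.eval (fun _ => t)) =
        (r + q * (P /ₘ q)).map (MvPolynomial.eval (fun _ => t)) := by
      rw [Polynomial.modByMonic_add_div P q]
    have hqe : Polynomial.eval s (q.map (MvPolynomial.eval (fun _ => t))) = 0 := by
      have hev1 : (MvPolynomial.eval (fun _ : Fin 1 => t)) (X 0 ^ 2 - 1) = t ^ 2 - 1 := by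
        simp
      rw [hq, Polynomial.map_add, Polynomial.map_pow, Polynomial.map_X, Polynomial.map_C, hev1,
        Polynomial.eval_add, Polynomial.eval_pow, Polynomial.eval_X, Polynomial.eval_C]
      linarith [hs]
    rw [← hP, hsplit, Polynomial.map_add, Polynomial.map_mul, Polynomial.eval_add,
      Polynomial.eval_mul, hqe, zero_mul, add_zero, hrform] at hev
    rw [Polynomial.map_add, Polynomial.map_mul, Polynomial.map_C, Polynomial.map_X] at hev
    simp only [Polynomial.map_C, Polynomial.eval_add, Polynomial.eval_mul, Polynomial.eval_C,
      Polynomial.eval_X] at hev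
    linarith [hev]
  have ha0 : a = 0 := by
    apply mv1_eq_zero_of_zero_on_Ioo
    intro t ht
    have hs2 : Real.sqrt (1 - t^2) ^ 2 = 1 - t ^ 2 := by
      rw [Real.sq_sqrt]; nlinarith [ht.1, ht.2]
    have h1 := key t ht _ hs2
    have h2 := key t ht (-(Real.sqrt (1 - t^2))) (by rw [neg_pow]; simp [hs2])
    have hspos : Real.sqrt (1 - t^2) > 0 := Real.sqrt_pos.2 (by nlinarith [ht.1, ht.2])
    nlinarith [h1, h2, hspos]
  have hb0 : b = 0 := by
    apply mv1_eq_zero_of_zero_on_Ioo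
    intro t ht
    have hs2 : Real.sqrt (1 - t^2) ^ 2 = 1 - t ^ 2 := by
      rw [Real.sq_sqrt]; nlinarith [ht.1, ht.2]
    have h1 := key t ht _ hs2
    rw [ha0] at h1
    simpa using h1
  have hr0 : r = 0 := by rw [hrform, ha0, hb0]; simp
  have hdvd : q ∣ P := (Polynomial.modByMonic_eq_zero_iff_dvd hmonic).1 hr0
  obtain ⟨c, hc⟩ := hdvd
  refine ⟨e.symm c, ?_⟩
  apply e.injective
  rw [map_mul, heq, AlgEquiv.apply_symm_apply, ← hc]
end

section
/- Let m(u,n) = C(u+n-1, n-1) denote the number of monomials of degree exactly u in n variables. There exists a constant c such that for every r ≥ 1, k ≥ 2, and u > (c·r)^{k-1}, we have C(u+k, k) > C(r·u + k − 1, k − 1). -/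
/-- there is an absolute constant `c` such that for all `r ≥ 1`, `k ≥ 2` and
`u > (c·r)^{k−1}`, the number of monomials `C(u+k, k)` exceeds `C(r·u + k − 1, k − 1)`. -/
theorem stmt_12 :
    ∃ c : ℕ, ∀ r k u : ℕ, 1 ≤ r → 2 ≤ k → (c * r) ^ (k - 1) < u →
      Nat.choose (r * u + k - 1) (k - 1) < Nat.choose (u + k) k := by
  use 4
  intro r k u hr hk hu
  obtain ⟨j, rfl⟩ : ∃ j, k = j + 1 := ⟨k - 1, by omega⟩
  simp only [Nat.add_sub_cancel] at hu ⊢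
  have hgl : r * u + (j + 1) - 1 = r * u + j := by omega
  rw [hgl]
  have hj : 1 ≤ j := by omega
  have h2le : (2 : ℕ) ≤ 4 * r := by omega
  have hju : j < u := by
    calc j < 2 ^ j := Nat.lt_two_pow_self (n := j)
    _ ≤ (4 * r) ^ j := Nat.pow_le_pow_left h2le j
    _ < u := hu
  have hu0 : 0 < u := by omega
  have hjr : j + 1 ≤ 2 ^ j := Nat.lt_two_pow_self (n := j)
  have hbase : r * u + j ≤ 2 * (r * u) := by nlinarith
  have hdesc : (u + 1) ^ (j + 1) ≤ (u + (j + 1)).descFactorial (j + 1) := by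
    have h := Nat.pow_sub_le_descFactorial (u + (j + 1)) (j + 1)
    have heq : u + (j + 1) + 1 - (j + 1) = u + 1 := by omega
    rwa [heq] at h
  have key : Nat.factorial (j + 1) * ((r * u + j).choose j) < Nat.factorial (j + 1) * ((u + (j + 1)).choose (j + 1)) := by
    calc Nat.factorial (j + 1) * ((r * u + j).choose j)
        = (j + 1) * (Nat.factorial j * (r * u + j).choose j) := by rw [Nat.factorial_succ]; ring
      _ = (j + 1) * (r * u + j).descFactorial j := by
          rw [Nat.descFactorial_eq_factorial_mul_choose]
      _ ≤ (j + 1) * (r * u + j) ^ j := Nat.mul_le_mul_left _ (Nat.descFactorial_le_pow _ _)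
      _ ≤ 2 ^ j * (2 * (r * u)) ^ j := Nat.mul_le_mul hjr (Nat.pow_le_pow_left hbase j)
      _ = (4 * r) ^ j * u ^ j := by rw [← mul_pow, ← mul_pow]; congr 1; ring
      _ < u * u ^ j := Nat.mul_lt_mul_of_lt_of_le hu le_rfl (Nat.pow_pos (n := j) hu0)
      _ = u ^ (j + 1) := (pow_succ' u j).symm
      _ < (u + 1) ^ (j + 1) := Nat.pow_lt_pow_left (by omega) (by omega)
      _ ≤ (u + (j + 1)).descFactorial (j + 1) := hdesc
      _ = Nat.factorial (j + 1) * (u + (j + 1)).choose (j + 1) :=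
          Nat.descFactorial_eq_factorial_mul_choose _ _
  exact Nat.lt_of_mul_lt_mul_left key
end

section
/- Suppose X ∈ ℝ^{k+1} lies on the image of a polynomial map G : ℝ^k → ℝ^{k+1} whose components have degree at most r. Then there exists a nonzero polynomial H : ℝ^{k+1} → ℝ of degree at most (c·r)^k (for an absolute constant c) such that H(G(z)) = 0 for all z ∈ ℝ^k. -/
open MvPolynomial

noncomputable instance fintypeBddSum (n u : ℕ) : Fintype {f : Fin n → ℕ // ∑ i, f i ≤ u} :=
  Fintype.ofInjective
    (fun f => (fun i => (⟨f.1 i, Nat.lt_succ_of_le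
      ((Finset.single_le_sum (fun _ _ => Nat.zero_le _) (Finset.mem_univ i)).trans f.2)⟩ :
      Fin (u+1)) : Fin n → Fin (u+1)))
    (by
      intro a b h
      apply Subtype.ext
      funext i
      exact congrArg Fin.val (congrFun h i))

lemma card_bddSum (n : ℕ) : ∀ u : ℕ,
    Fintype.card {f : Fin n → ℕ // ∑ i, f i ≤ u} = (u + n).choose n := by
  induction n with
  | zero =>
    intro u
    have e : {f : Fin 0 → ℕ // ∑ i, f i ≤ u} ≃ Unit :=
      { toFun := fun _ => ()
        invFun := fun _ => ⟨fun i => i.elim0, by simp⟩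
        left_inv := fun f => Subtype.ext (funext fun i => i.elim0)
        right_inv := fun _ => rfl }
    rw [Fintype.card_congr e]
    simp
  | succ n ih =>
    intro u
    set F : (Σ j : Fin (u+1), {g : Fin n → ℕ // ∑ i, g i ≤ u - j.1}) →
        {f : Fin (n+1) → ℕ // ∑ i, f i ≤ u} :=
      fun p => ⟨Fin.snoc p.2.1 p.1.1, by
        rw [Fin.sum_univ_castSucc]
        simp only [Fin.snoc_castSucc, Fin.snoc_last]
        have h1 : ∑ i, p.2.1 i ≤ u - p.1.1 := p.2.2
        have h2 : p.1.1 ≤ u := Nat.lt_succ_iff.mp p.1.2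
        omega⟩ with hF
    have hbij : Function.Bijective F := by
      constructor
      · rintro ⟨j₁, g₁⟩ ⟨j₂, g₂⟩ h
        have hv := congrArg Subtype.val h
        have hj : j₁ = j₂ := by
          have := congrFun hv (Fin.last n)
          simp only [hF, Fin.snoc_last] at this
          exact Fin.ext this
        subst hj
        have hg : g₁ = g₂ := by
          apply Subtype.ext
          funext i
          have := congrFun hv i.castSucc
          simpa only [hF, Fin.snoc_castSucc] using this
        rw [hg]
      · rintro ⟨f, hf⟩
        have hlast : f (Fin.last n) ≤ u :=
          (Finset.single_le_sum (fun _ _ => Nat.zero_le _) (Finset.mem_univ _)).trans hf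
        have hsum : ∑ i : Fin n, f i.castSucc ≤ u - f (Fin.last n) := by
          have := Fin.sum_univ_castSucc f ▸ hf
          omega
        refine ⟨⟨⟨f (Fin.last n), Nat.lt_succ_of_le hlast⟩, ⟨fun i => f i.castSucc, hsum⟩⟩, ?_⟩
        apply Subtype.ext
        exact Fin.snoc_init_self f
    rw [Fintype.card_congr (Equiv.ofBijective F hbij).symm, Fintype.card_sigma]
    have : ∀ j : Fin (u+1), Fintype.card {g : Fin n → ℕ // ∑ i, g i ≤ u - j.1}
        = (u - j.1 + n).choose n := fun j => ih (u - j.1)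
    simp_rw [this]
    rw [Fin.sum_univ_eq_sum_range (fun j => (u - j + n).choose n) (u+1)]
    have hrefl := Finset.sum_range_reflect (fun i => (i + n).choose n) (u+1)
    simp only [Nat.succ_sub_one] at hrefl
    calc ∑ j ∈ Finset.range (u+1), (u - j + n).choose n
        = ∑ i ∈ Finset.range (u+1), (i + n).choose n := hrefl
      _ = (u + n + 1).choose (n + 1) := Nat.sum_range_add_choose u n
      _ = (u + (n+1)).choose (n+1) := by rw [← add_assoc]

lemma asc_le (r u : ℕ) (hr : 1 ≤ r) : ∀ k : ℕ,
    (r * u + 1).ascFactorial k ≤ r ^ k * (u + 1).ascFactorial k := by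
  intro k
  induction k with
  | zero => simp
  | succ k ih =>
    rw [Nat.ascFactorial_succ, Nat.ascFactorial_succ]
    calc (r * u + 1 + k) * (r * u + 1).ascFactorial k
        ≤ (r * (u + 1 + k)) * (r ^ k * (u + 1).ascFactorial k) := by
          apply Nat.mul_le_mul _ ih
          nlinarith
      _ = r ^ (k+1) * ((u + 1 + k) * (u + 1).ascFactorial k) := by ring

lemma choose_mul_le (r u k : ℕ) (hr : 1 ≤ r) :
    (r * u + k).choose k ≤ r ^ k * (u + k).choose k := by
  have h1 := Nat.ascFactorial_eq_factorial_mul_choose (r * u) k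
  have h2 := Nat.ascFactorial_eq_factorial_mul_choose u k
  have h := asc_le r u hr k
  rw [h1, h2] at h
  have : Nat.factorial k * (r * u + k).choose k ≤
      Nat.factorial k * (r ^ k * (u + k).choose k) := by
    calc Nat.factorial k * (r * u + k).choose k
        ≤ r ^ k * (Nat.factorial k * (u + k).choose k) := h
      _ = Nat.factorial k * (r ^ k * (u + k).choose k) := by ring
  exact Nat.le_of_mul_le_mul_left this (Nat.factorial_pos k)

lemma key_count (k r : ℕ) (hr : 1 ≤ r) :
    (r * (2*r)^k + k).choose k < ((2*r)^k + (k+1)).choose (k+1) := by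
  set u := (2*r)^k with hu
  have hC : 0 < (u + k).choose k := Nat.choose_pos (Nat.le_add_left k u)
  have h2 : (u + k + 1) * (u + k).choose k = (u + k + 1).choose (k+1) * (k+1) :=
    Nat.add_one_mul_choose_eq (u + k) k
  have h3 : (k+1) * r ^ k ≤ u := by
    rw [hu, mul_pow]
    exact Nat.mul_le_mul_right _ (Nat.lt_two_pow_self (n := k))
  have h4 : (k+1) * ((r * u + k).choose k) < (k+1) * ((u + (k+1)).choose (k+1)) := by
    calc (k+1) * ((r * u + k).choose k)
        ≤ (k+1) * (r ^ k * (u + k).choose k) :=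
          Nat.mul_le_mul_left _ (choose_mul_le r u k hr)
      _ = ((k+1) * r ^ k) * (u + k).choose k := by ring
      _ < (u + k + 1) * (u + k).choose k := (Nat.mul_lt_mul_right hC).mpr (by omega)
      _ = (u + k + 1).choose (k+1) * (k+1) := h2
      _ = (k+1) * ((u + (k+1)).choose (k+1)) := by rw [← add_assoc]; ring
  exact Nat.lt_of_mul_lt_mul_left h4

lemma mem_span_monomials {n N : ℕ} (p : MvPolynomial (Fin n) ℝ) (hp : p.totalDegree ≤ N) :
    p ∈ Submodule.span ℝ
      ((fun f : Fin n → ℕ => (monomial (Finsupp.equivFunOnFinite.symm f) (1:ℝ))) ''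
        {f : Fin n → ℕ | ∑ i, f i ≤ N}) := by
  rw [p.as_sum]
  apply Submodule.sum_mem
  intro d hd
  have hdeg : ∑ i, d i ≤ N := by
    have h1 : (d.sum fun _ e => e) ≤ p.totalDegree := le_totalDegree hd
    have h2 : (d.sum fun _ e => e) = ∑ i, d i := Finsupp.sum_fintype d _ (fun _ => rfl)
    omega
  have : (monomial d (coeff d p) : MvPolynomial (Fin n) ℝ) = coeff d p • monomial d 1 := by
    rw [smul_monomial, smul_eq_mul, mul_one]
  rw [this]
  apply Submodule.smul_mem
  apply Submodule.subset_span
  exact ⟨⇑d, hdeg, by simp [Finsupp.equivFunOnFinite_symm_coe]⟩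

lemma totalDegree_aeval_monomial' {k r : ℕ} (G : Fin (k+1) → MvPolynomial (Fin k) ℝ)
    (hG : ∀ i, (G i).totalDegree ≤ r) (d : Fin (k+1) →₀ ℕ) :
    (aeval G (monomial d (1:ℝ))).totalDegree ≤ (d.sum fun _ e => e) * r := by
  rw [aeval_monomial, map_one, one_mul]
  calc (d.prod fun i e => G i ^ e).totalDegree
      ≤ ∑ i ∈ d.support, (G i ^ d i).totalDegree := totalDegree_finset_prod _ _
    _ ≤ ∑ i ∈ d.support, d i * r := by
        apply Finset.sum_le_sum
        intro i _
        exact (totalDegree_pow _ _).trans (Nat.mul_le_mul_left _ (hG i))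
    _ = (∑ i ∈ d.support, d i) * r := by rw [Finset.sum_mul]
    _ = (d.sum fun _ e => e) * r := rfl

lemma eval_aeval' {m n : ℕ} (z : Fin n → ℝ) (f : Fin m → MvPolynomial (Fin n) ℝ)
    (p : MvPolynomial (Fin m) ℝ) :
    eval z (aeval f p) = eval (fun i => eval z (f i)) p := by
  have h : ∀ (l : ℕ) (x : Fin l → ℝ) (q : MvPolynomial (Fin l) ℝ), aeval x q = eval x q := by
    intro l x q
    rw [aeval_def, eval, ← coe_eval₂Hom, Algebra.algebraMap_self]
  rw [← h, ← h, show (aeval f p : MvPolynomial (Fin n) ℝ) = bind₁ f p from rfl, aeval_bind₁]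
  simp [h]

open MvPolynomial in
/-- there is an absolute constant `c` such that for any polynomial map
`G : ℝ^k → ℝ^{k+1}` of degree at most `r ≥ 1` there is a nonzero polynomial `H` in `k+1`
variables of degree at most `(c·r)^k` vanishing identically on the image of `G`. -/
theorem stmt_13 :
    ∃ c : ℕ, ∀ (k r : ℕ), 1 ≤ r → ∀ (G : Fin (k + 1) → MvPolynomial (Fin k) ℝ),
      (∀ i, (G i).totalDegree ≤ r) →
      ∃ H : MvPolynomial (Fin (k + 1)) ℝ, H ≠ 0 ∧ H.totalDegree ≤ (c * r) ^ k ∧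
        ∀ z : Fin k → ℝ, eval (fun i => eval z (G i)) H = 0 := by
  refine ⟨2, fun k r hr G hG => ?_⟩
  set u := (2 * r) ^ k with hu
  set A := {f : Fin (k+1) → ℕ // ∑ i, f i ≤ u}
  set B := {f : Fin k → ℕ // ∑ i, f i ≤ r * u}
  set Bfin : Finset (MvPolynomial (Fin k) ℝ) :=
    Finset.univ.image (fun b : B => monomial (Finsupp.equivFunOnFinite.symm b.1) (1:ℝ))
    with hBfin
  set W : Submodule ℝ (MvPolynomial (Fin k) ℝ) := Submodule.span ℝ (Bfin : Set _) with hW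
  have hcoe : (Bfin : Set (MvPolynomial (Fin k) ℝ)) =
      (fun f : Fin k → ℕ => (monomial (Finsupp.equivFunOnFinite.symm f) (1:ℝ))) ''
        {f : Fin k → ℕ | ∑ i, f i ≤ r * u} := by
    ext x
    simp only [hBfin, Finset.coe_image, Finset.coe_univ, Set.image_univ, Set.mem_range,
      Set.mem_image, Set.mem_setOf_eq]
    constructor
    · rintro ⟨⟨f, hf⟩, rfl⟩; exact ⟨f, hf, rfl⟩
    · rintro ⟨f, hf, rfl⟩; exact ⟨⟨f, hf⟩, rfl⟩
  have memW : ∀ α : A,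
      aeval G (monomial (Finsupp.equivFunOnFinite.symm α.1) (1:ℝ)) ∈ W := by
    intro α
    rw [hW, hcoe]
    apply mem_span_monomials
    have hd : ((Finsupp.equivFunOnFinite.symm α.1).sum fun _ e => e) = ∑ i, α.1 i := by
      rw [Finsupp.sum_fintype _ _ (fun _ => rfl)]
      simp
    calc (aeval G (monomial (Finsupp.equivFunOnFinite.symm α.1) (1:ℝ))).totalDegree
        ≤ ((Finsupp.equivFunOnFinite.symm α.1).sum fun _ e => e) * r :=
          totalDegree_aeval_monomial' G hG _
      _ ≤ u * r := by rw [hd]; exact Nat.mul_le_mul_right _ α.2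
      _ = r * u := Nat.mul_comm _ _
  haveI : Module.Finite ℝ W := FiniteDimensional.span_of_finite ℝ Bfin.finite_toSet
  set w : A → W := fun α => ⟨_, memW α⟩ with hw
  have hnli : ¬ LinearIndependent ℝ w := by
    intro hli
    have hle : Fintype.card A ≤ Module.finrank ℝ W := hli.fintype_card_le_finrank
    have hfr : Module.finrank ℝ W ≤ Bfin.card := finrank_span_finset_le_card Bfin
    have hBcard : Bfin.card ≤ (r * u + k).choose k := by
      calc Bfin.card ≤ Fintype.card B := by
            rw [hBfin]
            exact Finset.card_image_le.trans (by simp)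
        _ = (r * u + k).choose k := card_bddSum k (r * u)
    have hA : Fintype.card A = (u + (k+1)).choose (k+1) := card_bddSum (k+1) u
    have hkey := key_count k r hr
    rw [← hu] at hkey
    omega
  obtain ⟨g, hgsum, α₀, hα₀⟩ := Fintype.not_linearIndependent_iff.mp hnli
  set H : MvPolynomial (Fin (k+1)) ℝ :=
    ∑ α : A, g α • (monomial (Finsupp.equivFunOnFinite.symm α.1) (1:ℝ)) with hH
  have hcoeff : coeff (Finsupp.equivFunOnFinite.symm α₀.1) H = g α₀ := by
    rw [hH, coeff_sum]
    rw [Finset.sum_eq_single α₀]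
    · simp [coeff_smul, coeff_monomial]
    · intro b _ hb
      rw [coeff_smul, coeff_monomial, if_neg, smul_zero]
      intro h
      exact hb (Subtype.ext (Finsupp.equivFunOnFinite.symm.injective h))
    · intro h
      exact absurd (Finset.mem_univ α₀) h
  refine ⟨H, ?_, ?_, ?_⟩
  · intro h0
    rw [h0, coeff_zero] at hcoeff
    exact hα₀ hcoeff.symm
  · apply (totalDegree_finset_sum _ _).trans
    apply Finset.sup_le
    intro α _
    have hd : ((Finsupp.equivFunOnFinite.symm α.1).sum fun _ e => e) = ∑ i, α.1 i := by
      rw [Finsupp.sum_fintype _ _ (fun _ => rfl)]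
      simp
    calc (g α • (monomial (Finsupp.equivFunOnFinite.symm α.1) (1:ℝ))).totalDegree
        ≤ (monomial (Finsupp.equivFunOnFinite.symm α.1) (1:ℝ)).totalDegree :=
          totalDegree_smul_le _ _
      _ ≤ ((Finsupp.equivFunOnFinite.symm α.1).sum fun _ e => e) := totalDegree_monomial_le _ _
      _ ≤ (2 * r) ^ k := by rw [hd]; exact α.2
  · intro z
    have hW0 : ∑ α : A,
        g α • (aeval G (monomial (Finsupp.equivFunOnFinite.symm α.1) (1:ℝ))) = 0 := by
      have := congrArg (Subtype.val) hgsum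
      simpa [hw] using this
    have hHa : aeval G H = 0 := by
      rw [hH, map_sum]
      simp_rw [map_smul]
      exact hW0
    have := congrArg (eval z) hHa
    rw [map_zero] at this
    rw [← eval_aeval' z G H, this]
end
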